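/- arXiv:2512.06375 — 2 statements merged into one kernel-verified Lean document; each statement's English description precedes it below -/
import Mathlib

section
/- Let (Ω, 𝒜, ℙ) be a probability space, let ι be an index type equipped with a filter 𝓕 ≠ ⊥ (modelling a net), and for each i ∈ ι let ξ_i : Ω → ℝ^d be a measurable map. Assume the net (ξ_i) is stochastically bounded: limsup_{𝓕} ℙ(‖ξ_i‖_∞ > a) → 0 as a → ∞. Let μ be a real-valued set function on the subsets of ℝ^d that is monotone with respect to inclusion (E ⊆ E' implies μ(E) ≤ μ(E')). If limsup_{𝓕} ℙ(ξ_i ∈ K) ≤ μ(K) for every compact K ⊆ ℝ^d, then limsup_{𝓕} ℙ(ξ_i ∈ F) ≤ μ(F) for every closed F ⊆ ℝ^d. (This is the upgrading step from compact to closed sets in the proof of the Extended Argmin-Theorem, where μ is the capacity functional of the random closed set of limit minimizers.) -/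
open MeasureTheory Filter

/-- Upgrading step from compact to closed sets: if a stochastically bounded net of
random vectors satisfies `limsup ℙ(ξ_i ∈ K) ≤ μ(K)` for all compact `K`, where `μ` is
a monotone set function, then the same bound holds for all closed sets. -/
theorem limsup_prob_le_of_compact_to_closed
    {Ω : Type*} [MeasurableSpace Ω] (ℙ : Measure Ω) [IsProbabilityMeasure ℙ]
    {ι : Type*} (𝓕 : Filter ι) [𝓕.NeBot] (d : ℕ)
    (ξ : ι → Ω → (Fin d → ℝ)) (hmeas : ∀ i, Measurable (ξ i))
    (hbdd : Tendsto (fun a : ℝ =>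
        limsup (fun i => (ℙ {ω | a < ‖ξ i ω‖}).toReal) 𝓕) atTop (nhds 0))
    (μ : Set (Fin d → ℝ) → ℝ) (hμ : ∀ E E' : Set (Fin d → ℝ), E ⊆ E' → μ E ≤ μ E')
    (hcompact : ∀ K : Set (Fin d → ℝ), IsCompact K →
        limsup (fun i => (ℙ {ω | ξ i ω ∈ K}).toReal) 𝓕 ≤ μ K) :
    ∀ F : Set (Fin d → ℝ), IsClosed F →
        limsup (fun i => (ℙ {ω | ξ i ω ∈ F}).toReal) 𝓕 ≤ μ F := by
  intro F hF
  -- boundedness helpers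
  have hbound : ∀ (s : ι → Set Ω), IsBoundedUnder (· ≤ ·) 𝓕 (fun i => (ℙ (s i)).toReal) := by
    intro s
    refine Filter.isBoundedUnder_of ⟨1, fun i => ?_⟩
    simpa using ENNReal.toReal_mono ENNReal.one_ne_top (prob_le_one (μ := ℙ) (s := s i))
  have hbound' : ∀ (s : ι → Set Ω), IsBoundedUnder (· ≥ ·) 𝓕 (fun i => (ℙ (s i)).toReal) := by
    intro s
    exact Filter.isBoundedUnder_of ⟨0, fun i => ENNReal.toReal_nonneg⟩
  have key : ∀ a : ℝ, limsup (fun i => (ℙ {ω | ξ i ω ∈ F}).toReal) 𝓕 ≤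
      μ F + limsup (fun i => (ℙ {ω | a < ‖ξ i ω‖}).toReal) 𝓕 := by
    intro a
    set K := F ∩ Metric.closedBall (0 : Fin d → ℝ) a with hK
    have hKc : IsCompact K := (isCompact_closedBall _ _).inter_left hF
    have hpt : ∀ i, (ℙ {ω | ξ i ω ∈ F}).toReal ≤
        (ℙ {ω | ξ i ω ∈ K}).toReal + (ℙ {ω | a < ‖ξ i ω‖}).toReal := by
      intro i
      have hsub : {ω | ξ i ω ∈ F} ⊆ {ω | ξ i ω ∈ K} ∪ {ω | a < ‖ξ i ω‖} := by
        intro ω hω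
        by_cases h : a < ‖ξ i ω‖
        · exact Or.inr h
        · exact Or.inl ⟨hω, by simpa [Metric.mem_closedBall, dist_zero_right] using not_lt.1 h⟩
      have := (measure_mono hsub).trans (measure_union_le (μ := ℙ) _ _)
      rw [← ENNReal.toReal_add (measure_ne_top _ _) (measure_ne_top _ _)]
      exact ENNReal.toReal_mono (ENNReal.add_ne_top.2 ⟨measure_ne_top ℙ _, measure_ne_top ℙ _⟩) this
    calc limsup (fun i => (ℙ {ω | ξ i ω ∈ F}).toReal) 𝓕
        ≤ limsup (fun i => (ℙ {ω | ξ i ω ∈ K}).toReal + (ℙ {ω | a < ‖ξ i ω‖}).toReal) 𝓕 := by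
          exact limsup_le_limsup (Filter.Eventually.of_forall hpt)
            ((hbound' fun i => {ω | ξ i ω ∈ F}).isCoboundedUnder_le)
            (Filter.isBoundedUnder_le_add (hbound fun i => {ω | ξ i ω ∈ K})
              (hbound fun i => {ω | a < ‖ξ i ω‖}))
      _ ≤ limsup (fun i => (ℙ {ω | ξ i ω ∈ K}).toReal) 𝓕
            + limsup (fun i => (ℙ {ω | a < ‖ξ i ω‖}).toReal) 𝓕 :=
          limsup_add_le (hbound' _) (hbound _) ((hbound' _).isCoboundedUnder_le) (hbound _)
      _ ≤ μ K + limsup (fun i => (ℙ {ω | a < ‖ξ i ω‖}).toReal) 𝓕 := by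
          gcongr; exact hcompact K hKc
      _ ≤ μ F + limsup (fun i => (ℙ {ω | a < ‖ξ i ω‖}).toReal) 𝓕 := by
          gcongr; exact hμ _ _ Set.inter_subset_left
  have : Tendsto (fun a : ℝ => μ F + limsup (fun i => (ℙ {ω | a < ‖ξ i ω‖}).toReal) 𝓕)
      atTop (nhds (μ F)) := by
    simpa using (tendsto_const_nhds.add hbdd)
  exact ge_of_tendsto this (Filter.Eventually.of_forall key)
end

section
/- Let (Ω, 𝒜, ℙ) be a probability space, let ι be an index type equipped with a filter 𝓕 ≠ ⊥ (modelling a net), and for each i ∈ ι let ξ_i : Ω → ℝ^d be a measurable map. Assume the net (ξ_i) is stochastically bounded: limsup_{𝓕} ℙ(‖ξ_i‖_∞ > a) → 0 as a → ∞. Let ν be a real-valued set function on the subsets of ℝ^d that is monotone with respect to inclusion. If liminf_{𝓕} ℙ(ξ_i ∈ ℝ^d \ K) ≥ ν(ℝ^d \ K) for every compact K ⊆ ℝ^d, then liminf_{𝓕} ℙ(ξ_i ∈ G) ≥ ν(G) for every open G ⊆ ℝ^d. (This is the upgrading step from complements of compact sets to open sets in the proof of the Extended Argmin-Theorem, where ν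 is the containment functional of the random closed set of limit minimizers.) -/
/-!
Given `ε > 0`, stochastic boundedness yields a radius `a` with
`limsup ℙ(‖ξ_i‖ > a) < ε`. The set `K = Gᶜ ∩ closedBall 0 a` is compact and `G ⊆ Kᶜ`, so
monotonicity of `ν` and the hypothesis give `ν G ≤ liminf ℙ(ξ_i ∈ Kᶜ)`. Since
`Kᶜ ⊆ {‖x‖ > a} ∪ G`, this liminf is at most `limsup ℙ(‖ξ_i‖ > a) + liminf ℙ(ξ_i ∈ G)`,
hence at most `ε + liminf ℙ(ξ_i ∈ G)`.
-/

open MeasureTheory Filter Set Metric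

theorem Filter.liminf_le_limsup_add_liminf_of_le_add {ι : Type*} {f : Filter ι} [f.NeBot]
    {u v w : ι → ℝ} (hu : IsBoundedUnder (· ≥ ·) f u)
    (hv_ge : IsBoundedUnder (· ≥ ·) f v) (hv_le : IsBoundedUnder (· ≤ ·) f v)
    (hw_ge : IsBoundedUnder (· ≥ ·) f w) (hw_le : IsBoundedUnder (· ≤ ·) f w)
    (h : ∀ᶠ i in f, u i ≤ v i + w i) :
    liminf u f ≤ limsup v f + liminf w f :=
  (liminf_le_liminf h hu (isBoundedUnder_le_add hv_le hw_le).isCoboundedUnder_ge).trans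
    (liminf_add_le hv_ge hv_le hw_ge hw_le.isCoboundedUnder_ge)

namespace MeasureTheory

variable {Ω ι : Type*} [MeasurableSpace Ω] (μ : Measure Ω) (f : Filter ι)

theorem isBoundedUnder_ge_measureReal (s : ι → Set Ω) :
    IsBoundedUnder (· ≥ ·) f (fun i => μ.real (s i)) :=
  isBoundedUnder_of ⟨0, fun _ => measureReal_nonneg⟩

theorem isBoundedUnder_le_measureReal [IsFiniteMeasure μ] (s : ι → Set Ω) :
    IsBoundedUnder (· ≤ ·) f (fun i => μ.real (s i)) :=
  isBoundedUnder_of ⟨μ.real univ, fun _ => measureReal_mono (subset_univ _)⟩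

theorem liminf_measureReal_preimage_le_limsup_add_liminf [IsFiniteMeasure μ] [f.NeBot] {α : Type*}
    (X : ι → Ω → α) {s t u : Set α} (hs : s ⊆ t ∪ u) :
    liminf (fun i => μ.real (X i ⁻¹' s)) f ≤
      limsup (fun i => μ.real (X i ⁻¹' t)) f + liminf (fun i => μ.real (X i ⁻¹' u)) f :=
  liminf_le_limsup_add_liminf_of_le_add (isBoundedUnder_ge_measureReal μ f _)
    (isBoundedUnder_ge_measureReal μ f _) (isBoundedUnder_le_measureReal μ f _)
    (isBoundedUnder_ge_measureReal μ f _) (isBoundedUnder_le_measureReal μ f _)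
    (Eventually.of_forall fun i =>
      (measureReal_mono (preimage_mono hs)).trans (measureReal_union_le _ _))

end MeasureTheory

theorem compl_inter_closedBall_subset {E : Type*} [SeminormedAddGroup E] (G : Set E) (a : ℝ) :
    (Gᶜ ∩ closedBall 0 a)ᶜ ⊆ {x | a < ‖x‖} ∪ G := by
  intro x hx
  rw [compl_inter, compl_compl, mem_union, mem_compl_iff, mem_closedBall_zero_iff,
    not_le] at hx
  exact hx.symm

theorem liminf_prob_ge_of_cocompact_to_open_general
    {Ω : Type*} [MeasurableSpace Ω] (ℙ : Measure Ω) [IsProbabilityMeasure ℙ]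
    {ι : Type*} (𝓕 : Filter ι) [𝓕.NeBot] (d : ℕ)
    (ξ : ι → Ω → (Fin d → ℝ))
    (hbdd : Tendsto (fun a : ℝ =>
        limsup (fun i => (ℙ {ω | a < ‖ξ i ω‖}).toReal) 𝓕) atTop (nhds 0))
    (ν : Set (Fin d → ℝ) → ℝ) (hν : ∀ E E' : Set (Fin d → ℝ), E ⊆ E' → ν E ≤ ν E')
    (hcocompact : ∀ K : Set (Fin d → ℝ), IsCompact K →
        ν Kᶜ ≤ liminf (fun i => (ℙ {ω | ξ i ω ∈ Kᶜ}).toReal) 𝓕) :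
    ∀ G : Set (Fin d → ℝ), IsOpen G →
        ν G ≤ liminf (fun i => (ℙ {ω | ξ i ω ∈ G}).toReal) 𝓕 := by
  intro G hG
  refine le_of_forall_pos_le_add fun ε hε => ?_
  obtain ⟨a, ha⟩ := (hbdd.eventually (gt_mem_nhds hε)).exists
  have hK : IsCompact (Gᶜ ∩ closedBall 0 a) :=
    (isCompact_closedBall 0 a).inter_left hG.isClosed_compl
  calc ν G ≤ ν (Gᶜ ∩ closedBall 0 a)ᶜ := hν _ _ fun x hx hxK => hxK.1 hx
    _ ≤ liminf (fun i => ℙ.real (ξ i ⁻¹' (Gᶜ ∩ closedBall 0 a)ᶜ)) 𝓕 := hcocompact _ hK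
    _ ≤ limsup (fun i => ℙ.real (ξ i ⁻¹' {x | a < ‖x‖})) 𝓕 +
          liminf (fun i => ℙ.real (ξ i ⁻¹' G)) 𝓕 :=
      liminf_measureReal_preimage_le_limsup_add_liminf ℙ 𝓕 ξ (compl_inter_closedBall_subset G a)
    _ ≤ liminf (fun i => (ℙ {ω | ξ i ω ∈ G}).toReal) 𝓕 + ε := by
      rw [add_comm]
      exact add_le_add_right ha.le _

/-- Upgrading step from complements of compact sets to open sets: if a stochastically
bounded net of random vectors satisfies `liminf ℙ(ξ_i ∈ Kᶜ) ≥ ν(Kᶜ)` for all compact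
`K`, where `ν` is a monotone set function, then `liminf ℙ(ξ_i ∈ G) ≥ ν(G)` for all
open sets `G`. -/
theorem liminf_prob_ge_of_cocompact_to_open
    {Ω : Type*} [MeasurableSpace Ω] (ℙ : Measure Ω) [IsProbabilityMeasure ℙ]
    {ι : Type*} (𝓕 : Filter ι) [𝓕.NeBot] (d : ℕ)
    (ξ : ι → Ω → (Fin d → ℝ)) (hmeas : ∀ i, Measurable (ξ i))
    (hbdd : Tendsto (fun a : ℝ =>
        limsup (fun i => (ℙ {ω | a < ‖ξ i ω‖}).toReal) 𝓕) atTop (nhds 0))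
    (ν : Set (Fin d → ℝ) → ℝ) (hν : ∀ E E' : Set (Fin d → ℝ), E ⊆ E' → ν E ≤ ν E')
    (hcocompact : ∀ K : Set (Fin d → ℝ), IsCompact K →
        ν Kᶜ ≤ liminf (fun i => (ℙ {ω | ξ i ω ∈ Kᶜ}).toReal) 𝓕) :
    ∀ G : Set (Fin d → ℝ), IsOpen G →
        ν G ≤ liminf (fun i => (ℙ {ω | ξ i ω ∈ G}).toReal) 𝓕 :=
  liminf_prob_ge_of_cocompact_to_open_general ℙ 𝓕 d ξ hbdd ν hν hcocompact
end
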